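/- arXiv:2602.17459 — 3 statements merged into one kernel-verified Lean document; each statement's English description precedes it below -/
import Mathlib

section
/- Let d/2 < s ≤ d - 1, n ≥ s + 3, and fix m with s + 2 ≤ m ≤ n - 1. Define A_1 = { {1} ∪ A : A ∈ binom([3,n], d), |A ∩ [3,m]| ≥ s }, A_2 = { {2} ∪ A : A ∈ binom([3,n], d), |A ∩ [3,m]| < s }, and A_12 = { {1,2} ∪ A : A ∈ binom([3,n], d-1) }. Then F = A_1 ∪ A_2 ∪ A_12 is an s-witness family, i.e., for every F ∈ F there exists B_F ⊆ F with |B_F| = s such that F ∩ F' ≠ B_F for all F' ∈ F. -/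
open Finset

/-- The two-star construction A₁ ∪ A₂ ∪ A₁₂ is an s-witness family for d/2 < s ≤ d-1. -/
theorem stmt_12 (n d s m : ℕ)
    (hds : d < 2 * s) (hsd : s ≤ d - 1) (hn : s + 3 ≤ n)
    (hm1 : s + 2 ≤ m) (hm2 : m ≤ n - 1)
    (𝓐₁ 𝓐₂ 𝓐₁₂ 𝓕 : Finset (Finset ℕ))
    (h1 : 𝓐₁ = (((Finset.Icc 3 n).powersetCard d).filter
        (fun A => s ≤ (A ∩ Finset.Icc 3 m).card)).image (insert 1))
    (h2 : 𝓐₂ = (((Finset.Icc 3 n).powersetCard d).filter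
        (fun A => (A ∩ Finset.Icc 3 m).card < s)).image (insert 2))
    (h12 : 𝓐₁₂ = ((Finset.Icc 3 n).powersetCard (d - 1)).image
        (fun A => insert 1 (insert 2 A)))
    (hF : 𝓕 = 𝓐₁ ∪ 𝓐₂ ∪ 𝓐₁₂) :
    ∀ F ∈ 𝓕, ∃ B ⊆ F, B.card = s ∧ ∀ F' ∈ 𝓕, F ∩ F' ≠ B := by
  subst h1 h2 h12 hF
  have hs2 : 2 ≤ s := by omega
  have hd : s + 1 ≤ d := by omega
  -- splitting lemma
  have hsplit : ∀ A : Finset ℕ, A ⊆ Icc 3 n →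
      (A ∩ Icc 3 m).card + (A ∩ Icc (m+1) n).card = A.card := by
    intro A hA
    rw [← card_union_of_disjoint]
    · congr 1
      ext x
      simp only [mem_union, mem_inter, mem_Icc]
      constructor
      · rintro (⟨h, _⟩ | ⟨h, _⟩) <;> exact h
      · intro hx
        have hxn := mem_Icc.mp (hA hx)
        by_cases hxm : x ≤ m
        · exact Or.inl ⟨hx, hxn.1, hxm⟩
        · exact Or.inr ⟨hx, by omega, hxn.2⟩
    · rw [Finset.disjoint_left]
      intro x hx hx'
      simp only [mem_inter, mem_Icc] at hx hx'
      omega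
  intro F hF
  simp only [mem_union, mem_image, mem_filter, mem_powersetCard] at hF
  rcases hF with (⟨A, ⟨⟨hAsub, hAcard⟩, hAs⟩, rfl⟩ | ⟨A, ⟨⟨hAsub, hAcard⟩, hAs⟩, rfl⟩)
      | ⟨A, ⟨hAsub, hAcard⟩, rfl⟩
  · -- F ∈ A₁
    obtain ⟨B, hB, hBcard⟩ := exists_subset_card_eq hAs
    have hBm : B ⊆ Icc 3 m := hB.trans inter_subset_right
    have hBA : B ⊆ A := hB.trans inter_subset_left
    have h1B : 1 ∉ B := fun h => by have := mem_Icc.mp (hBm h); omega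
    have h2B : 2 ∉ B := fun h => by have := mem_Icc.mp (hBm h); omega
    refine ⟨B, hBA.trans (subset_insert _ _), hBcard, ?_⟩
    intro F' hF' heq
    simp only [mem_union, mem_image, mem_filter, mem_powersetCard] at hF'
    rcases hF' with (⟨A', ⟨⟨hA'sub, hA'card⟩, hA's⟩, rfl⟩ | ⟨A', ⟨⟨hA'sub, hA'card⟩, hA's⟩, rfl⟩)
        | ⟨A', ⟨hA'sub, hA'card⟩, rfl⟩
    · exact h1B (heq ▸ mem_inter.mpr ⟨mem_insert_self _ _, mem_insert_self _ _⟩)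
    · -- F' ∈ A₂ : B ⊆ A' ∩ Icc 3 m, contradiction with card
      have hBF' : B ⊆ insert 2 A' := heq ▸ inter_subset_right
      have hBA' : B ⊆ A' := fun x hx => by
        rcases mem_insert.mp (hBF' hx) with h | h
        · exact absurd (h ▸ hx) h2B
        · exact h
      have : B ⊆ A' ∩ Icc 3 m := fun x hx => mem_inter.mpr ⟨hBA' hx, hBm hx⟩
      have := card_le_card this
      omega
    · exact h1B (heq ▸ mem_inter.mpr ⟨mem_insert_self _ _, mem_insert_self _ _⟩)
  · -- F ∈ A₂
    have hsp := hsplit A hAsub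
    have hnear : d - s + 1 ≤ (A ∩ Icc (m+1) n).card := by omega
    obtain ⟨B₀, hB₀, hB₀card⟩ := exists_subset_card_eq hnear
    have hB₀A : B₀ ⊆ A := hB₀.trans inter_subset_left
    have hB₀I : B₀ ⊆ Icc (m+1) n := hB₀.trans inter_subset_right
    obtain ⟨B, hB₀B, hBA, hBcard⟩ :=
      exists_subsuperset_card_eq hB₀A (by omega : B₀.card ≤ s) (by omega : s ≤ A.card)
    have hBn : B ⊆ Icc 3 n := hBA.trans hAsub
    have h1B : 1 ∉ B := fun h => by have := mem_Icc.mp (hBn h); omega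
    have h2B : 2 ∉ B := fun h => by have := mem_Icc.mp (hBn h); omega
    refine ⟨B, hBA.trans (subset_insert _ _), hBcard, ?_⟩
    intro F' hF' heq
    simp only [mem_union, mem_image, mem_filter, mem_powersetCard] at hF'
    rcases hF' with (⟨A', ⟨⟨hA'sub, hA'card⟩, hA's⟩, rfl⟩ | ⟨A', ⟨⟨hA'sub, hA'card⟩, hA's⟩, rfl⟩)
        | ⟨A', ⟨hA'sub, hA'card⟩, rfl⟩
    · -- F' ∈ A₁ : B₀ ⊆ A' ∩ Icc (m+1) n, contradiction
      have hsp' := hsplit A' hA'sub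
      have hBF' : B₀ ⊆ insert 1 A' := by
        have h' := hB₀B
        rw [← heq] at h'
        exact h'.trans inter_subset_right
      have hB₀A' : B₀ ⊆ A' := fun x hx => by
        rcases mem_insert.mp (hBF' hx) with h | h
        · have := mem_Icc.mp (hB₀I hx); omega
        · exact h
      have : B₀ ⊆ A' ∩ Icc (m+1) n := fun x hx => mem_inter.mpr ⟨hB₀A' hx, hB₀I hx⟩
      have := card_le_card this
      omega
    · exact h2B (heq ▸ mem_inter.mpr ⟨mem_insert_self _ _, mem_insert_self _ _⟩)
    · exact h2B (heq ▸ mem_inter.mpr ⟨mem_insert_self _ _,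
        mem_insert.mpr (Or.inr (mem_insert_self _ _))⟩)
  · -- F ∈ A₁₂
    obtain ⟨B, hB, hBcard⟩ := exists_subset_card_eq (show s ≤ A.card by omega)
    have hBn : B ⊆ Icc 3 n := hB.trans hAsub
    have h1B : 1 ∉ B := fun h => by have := mem_Icc.mp (hBn h); omega
    have h2B : 2 ∉ B := fun h => by have := mem_Icc.mp (hBn h); omega
    refine ⟨B, hB.trans ((subset_insert _ _).trans (subset_insert _ _)), hBcard, ?_⟩
    intro F' hF' heq
    simp only [mem_union, mem_image, mem_filter, mem_powersetCard] at hF'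
    rcases hF' with (⟨A', ⟨⟨hA'sub, hA'card⟩, hA's⟩, rfl⟩ | ⟨A', ⟨⟨hA'sub, hA'card⟩, hA's⟩, rfl⟩)
        | ⟨A', ⟨hA'sub, hA'card⟩, rfl⟩
    · exact h1B (heq ▸ mem_inter.mpr ⟨mem_insert_self _ _, mem_insert_self _ _⟩)
    · exact h2B (heq ▸ mem_inter.mpr ⟨mem_insert.mpr (Or.inr (mem_insert_self _ _)),
        mem_insert_self _ _⟩)
    · exact h1B (heq ▸ mem_inter.mpr ⟨mem_insert_self _ _, mem_insert_self _ _⟩)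
end

section
/- Suppose we are given a family F ⊆ binom([n], d+1), a set B_1 of s-element 'witness' sets B each equipped with an element x_B ∉ B, and families F_B ⊆ F for B ∈ B_1 such that: every F ∈ F containing B also contains x_B, and every F ∈ F_B contains B ∪ {x_B}. Define E_B = { F \ {x_B} : F ∈ F_B }. Then for B, B' ∈ B_1 with x_B ≠ x_{B'}, the families E_B and E_{B'} are disjoint. -/
/-- Under the injection setup, for B, B' ∈ B₁ with x_B ≠ x_{B'}, the families
E_B = { F \ {x_B} : F ∈ F_B } and E_{B'} are disjoint. -/
theorem stmt_16 (n d s : ℕ) (𝓕 : Finset (Finset ℕ))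
    (h𝓕 : 𝓕 ⊆ Finset.powersetCard (d + 1) (Finset.Icc 1 n))
    (B₁ : Finset (Finset ℕ)) (x : Finset ℕ → ℕ)
    (hBcard : ∀ B ∈ B₁, B.card = s)
    (hxB : ∀ B ∈ B₁, x B ∉ B)
    (hmodel : ∀ B ∈ B₁, ∀ F ∈ 𝓕, B ⊆ F → x B ∈ F)
    (𝓕B : Finset ℕ → Finset (Finset ℕ))
    (h𝓕B : ∀ B ∈ B₁, 𝓕B B ⊆ 𝓕 ∧ ∀ F ∈ 𝓕B B, insert (x B) B ⊆ F) :
    ∀ B ∈ B₁, ∀ B' ∈ B₁, x B ≠ x B' →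
      Disjoint ((𝓕B B).image (fun F => F.erase (x B)))
               ((𝓕B B').image (fun F => F.erase (x B'))) := by
  intro B hB B' hB' hxx
  rw [Finset.disjoint_left]
  rintro E hE hE'
  simp only [Finset.mem_image] at hE hE'
  obtain ⟨F, hF, rfl⟩ := hE
  obtain ⟨F', hF', hEF'⟩ := hE'
  have hxF : x B ∈ F := (h𝓕B B hB).2 F hF (Finset.mem_insert_self _ _)
  have hFins : insert (x B) (F.erase (x B)) = F := Finset.insert_erase hxF
  have hB'F' : B' ⊆ F' := (Finset.subset_insert _ _).trans ((h𝓕B B' hB').2 F' hF')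
  have hB'E : B' ⊆ F.erase (x B) := by
    rw [← hEF']
    intro y hy
    exact Finset.mem_erase.2 ⟨fun h => hxB B' hB' (h ▸ hy), hB'F' hy⟩
  have hF𝓕 : F ∈ 𝓕 := (h𝓕B B hB).1 hF
  have hxB'F : x B' ∈ F := hmodel B' hB' F hF𝓕 (hB'E.trans (Finset.erase_subset _ _))
  have : x B' ∈ F.erase (x B) := Finset.mem_erase.2 ⟨fun h => hxx h.symm, hxB'F⟩
  rw [← hEF'] at this
  exact (Finset.notMem_erase _ _) this
end

section
/- Under the same setup, define U(B, B') = { E ∈ binom([n], d) : B ∪ B' ⊆ E, x_B ∉ E, x_{B'} ∉ E } for B, B' ∈ B_1. Then for any B, B' ∈ B_1 with x_B ≠ x_{B'}, the set U(B, B') is disjoint from E = union over B'' ∈ B_1 of E_{B''}. -/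
/-- Under the injection setup, U(B,B') is disjoint from E = ⋃_{B'' ∈ B₁} E_{B''}
whenever x_B ≠ x_{B'}. -/
theorem stmt_17 (n d s : ℕ) (𝓕 : Finset (Finset ℕ))
    (h𝓕 : 𝓕 ⊆ Finset.powersetCard (d + 1) (Finset.Icc 1 n))
    (B₁ : Finset (Finset ℕ)) (x : Finset ℕ → ℕ)
    (hBcard : ∀ B ∈ B₁, B.card = s)
    (hxB : ∀ B ∈ B₁, x B ∉ B)
    (hmodel : ∀ B ∈ B₁, ∀ F ∈ 𝓕, B ⊆ F → x B ∈ F)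
    (𝓕B : Finset ℕ → Finset (Finset ℕ))
    (h𝓕B : ∀ B ∈ B₁, 𝓕B B ⊆ 𝓕 ∧ ∀ F ∈ 𝓕B B, insert (x B) B ⊆ F) :
    ∀ B ∈ B₁, ∀ B' ∈ B₁, x B ≠ x B' →
      Disjoint
        (((Finset.Icc 1 n).powersetCard d).filter
          (fun E => B ∪ B' ⊆ E ∧ x B ∉ E ∧ x B' ∉ E))
        (B₁.biUnion (fun B'' => (𝓕B B'').image (fun F => F.erase (x B'')))) := by
  intro B hB B' hB' hne
  rw [Finset.disjoint_left]
  intro E hE hE2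
  simp only [Finset.mem_filter] at hE
  obtain ⟨-, hsub, hxBE, hxB'E⟩ := hE
  simp only [Finset.mem_biUnion, Finset.mem_image] at hE2
  obtain ⟨B'', hB'', F, hF, rfl⟩ := hE2
  have hF𝓕 : F ∈ 𝓕 := (h𝓕B B'' hB'').1 hF
  have hEF : F.erase (x B'') ⊆ F := Finset.erase_subset _ _
  have hBF : B ⊆ F := (Finset.union_subset_iff.mp hsub).1.trans hEF
  have hB'F : B' ⊆ F := (Finset.union_subset_iff.mp hsub).2.trans hEF
  have h1 : x B ∈ F := hmodel B hB F hF𝓕 hBF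
  have h2 : x B' ∈ F := hmodel B' hB' F hF𝓕 hB'F
  have e1 : x B = x B'' := by
    by_contra h
    exact hxBE (Finset.mem_erase.mpr ⟨h, h1⟩)
  have e2 : x B' = x B'' := by
    by_contra h
    exact hxB'E (Finset.mem_erase.mpr ⟨h, h2⟩)
  exact hne (e1.trans e2.symm)
end
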